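/- Consider the constant-product AMM whose mempool contains exactly one honest transaction tx = swap sending v > 0 units of τ₀ with minimum-output constraint vmin = 0. Then for every list of adversarial moves tr, the adversary's gain satisfies gainMoves σ tr < extractable(σ) + v·pr₀, where extractable(σ) = (√(pr₀·b₀) − √(pr₁·b₁))² and b₀, b₁ are the AMM reserves in σ. -/

import Mathlib

open scoped NNReal

/-! A constant-product AMM over two token types τ₀, τ₁ with fixed positive
prices pr₀, pr₁. A swap sending `v > 0` units of token τ returns
`v · r' / (r + v)` units of the other token, where `r`, `r'` are the input and
output reserves, so the product of reserves is invariant. Honest swaps come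
from the mempool and carry a minimum-output constraint `vmin`; the adversary
(with unbounded funds) can craft arbitrary swaps. -/

inductive Participant where
  | Hon : String → Participant
  | Adv : Participant
deriving DecidableEq

inductive Token where
  | τ₀ : Token
  | τ₁ : Token
deriving DecidableEq

/-- The other token type. -/
def Token.other : Token → Token
  | .τ₀ => .τ₁
  | .τ₁ => .τ₀

abbrev TxId := ℕ

/-- A `swap` transaction: participant `P` sends `v > 0` units of token `τ`,
requiring at least `vmin` units of the other token in exchange. -/
structure Tx where
  P : Participant
  v : ℝ
  v_pos : 0 < v
  τ : Token
  vmin : ℝ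

/-- The honest part of the system state: AMM reserves `bal`, cumulative honest
wallet `wal`, and the mempool. -/
structure AMMState where
  bal : Token → ℝ≥0
  wal : Token → ℝ≥0
  mempool : List (TxId × Tx)

/-- System state: adversary wallet plus honest state. -/
structure AMMSys where
  Δ : Token → ℝ
  s : AMMState

/-- Semantics of a swap of `v` units of `τin` by `P` with minimum output `vmin`. -/
noncomputable def swapSem (P : Participant) (v : ℝ) (τin : Token) (vmin : ℝ)
    (σ : AMMSys) : Option AMMSys :=
  let τout := τin.other
  let rin : ℝ := σ.s.bal τin
  let rout : ℝ := σ.s.bal τout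
  let x : ℝ := v * rout / (rin + v)
  if 0 < v ∧ (P = .Adv ∨ v ≤ (σ.s.wal τin : ℝ)) ∧ vmin ≤ x ∧ x < rout then
    some { Δ := if P = .Adv
                then fun τ => σ.Δ τ + (if τ = τout then x else 0)
                                    - (if τ = τin then v else 0)
                else σ.Δ
         , s := { bal := fun τ => if τ = τin then σ.s.bal τin + v.toNNReal
                                  else σ.s.bal τout - x.toNNReal
                , wal := if P = .Adv then σ.s.wal
                         else fun τ => σ.s.wal τ + (if τ = τout then x.toNNReal else 0)
                                               - (if τ = τin then v.toNNReal else 0)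
                , mempool := σ.s.mempool } }
  else none

/-- Adversarial moves: craft an adversary-signed swap, or execute a mempool
transaction. -/
inductive Move where
  | adv : (v : ℝ) → 0 < v → (τ : Token) → (vmin : ℝ) → Move
  | mempool : TxId → Move

/-- Semantics of adversarial moves. A successfully executed mempool transaction
is removed from the mempool. -/
noncomputable def semMove (σ : AMMSys) : Move → Option AMMSys
  | .adv v _ τ vmin => swapSem .Adv v τ vmin σ
  | .mempool id =>
    match σ.s.mempool.find? (fun p => p.1 == id) with
    | none => none
    | some (_, tx) =>
      match swapSem tx.P tx.v tx.τ tx.vmin σ with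
      | none => none
      | some σ' =>
        some { Δ := σ'.Δ
             , s := { bal := σ'.s.bal, wal := σ'.s.wal
                    , mempool := σ.s.mempool.filter (fun p => p.1 != id) } }

/-- Composed effect of a list of moves (failing moves are skipped). -/
noncomputable def semMoves (σ : AMMSys) : List Move → AMMSys
  | [] => σ
  | m :: ms =>
    match semMove σ m with
    | none => semMoves σ ms
    | some σ' => semMoves σ' ms

/-- Adversarial gain of a list of moves, at token prices `pr₀`, `pr₁`. -/
noncomputable def gainMoves (pr₀ pr₁ : ℝ) (σ : AMMSys) (tr : List Move) : ℝ :=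
  pr₀ * ((semMoves σ tr).Δ .τ₀ - σ.Δ .τ₀) + pr₁ * ((semMoves σ tr).Δ .τ₁ - σ.Δ .τ₁)

/-- Maximal extractable value. -/
structure MEV (pr₀ pr₁ : ℝ) (σ : AMMSys) (v : ℝ) : Prop where
  trace_reaches_v : ∃ tr, gainMoves pr₀ pr₁ σ tr = v
  other_traces_worse : ∀ tr, gainMoves pr₀ pr₁ σ tr ≤ v

/-- Least upper bound of the extractable values. -/
structure MEVsup (pr₀ pr₁ : ℝ) (σ : AMMSys) (v : ℝ) : Prop where
  traces_approx : ∀ ε : ℝ, 0 < ε → ∃ tr, v ≤ gainMoves pr₀ pr₁ σ tr + ε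
  other_traces_worse : ∀ tr, gainMoves pr₀ pr₁ σ tr ≤ v

/-- Value extractable by rebalancing the AMM (arbitrage). -/
noncomputable def extractable (pr₀ pr₁ : ℝ) (σ : AMMSys) : ℝ :=
  (Real.sqrt (pr₀ * (σ.s.bal .τ₀ : ℝ)) - Real.sqrt (pr₁ * (σ.s.bal .τ₁ : ℝ)))^2

/-! The argument runs on the potential "value of the adversary's wallet plus `extractable`".
Since `extractable = pr₀ b₀ + pr₁ b₁ - 2 √(pr₀ pr₁ b₀ b₁)` and swaps preserve `b₀ b₁`, an
adversarial swap only moves value between the adversary's wallet and the reserves and leaves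
the potential unchanged. The honest swap leaves the adversary's wallet alone, adds `v pr₀` to
the reserves and takes a positive amount of τ₁ out of them, so it raises the potential by less
than `v pr₀`; afterwards the mempool is empty. The gain is the increase of the potential plus
`extractable σ` minus the final, nonnegative, extractable value. -/

lemma Token.other_ne : ∀ τ : Token, τ.other ≠ τ
  | .τ₀ => nofun
  | .τ₁ => nofun

def Token.price (pr₀ pr₁ : ℝ) : Token → ℝ
  | .τ₀ => pr₀
  | .τ₁ => pr₁

lemma Token.price_pos {pr₀ pr₁ : ℝ} (hpr₀ : 0 < pr₀) (hpr₁ : 0 < pr₁) :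
    ∀ τ : Token, 0 < τ.price pr₀ pr₁
  | .τ₀ => hpr₀
  | .τ₁ => hpr₁

lemma extractable_nonneg (pr₀ pr₁ : ℝ) (σ : AMMSys) : 0 ≤ extractable pr₀ pr₁ σ :=
  sq_nonneg _

noncomputable def swapOut (v : ℝ) (τ : Token) (σ : AMMSys) : ℝ :=
  v * σ.s.bal τ.other / (σ.s.bal τ + v)

section Swap

variable {P : Participant} {v : ℝ} {τ : Token} {vmin : ℝ} {σ σ' : AMMSys}

lemma swapOut_nonneg (hv : 0 ≤ v) : 0 ≤ swapOut v τ σ := by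
  unfold swapOut; positivity

lemma swapOut_pos (hv : 0 < v) (hlt : swapOut v τ σ < σ.s.bal τ.other) :
    0 < swapOut v τ σ := by
  have : 0 < (σ.s.bal τ.other : ℝ) := (swapOut_nonneg hv.le).trans_lt hlt
  unfold swapOut; positivity

lemma swapSem_eq_some (h : swapSem P v τ vmin σ = some σ') :
    0 < v ∧ swapOut v τ σ < σ.s.bal τ.other ∧
    (σ'.s.bal τ : ℝ) = σ.s.bal τ + v ∧
    (σ'.s.bal τ.other : ℝ) = σ.s.bal τ.other - swapOut v τ σ ∧
    σ'.s.mempool = σ.s.mempool ∧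
    σ'.Δ = if P = .Adv then
      fun τ' => σ.Δ τ' + (if τ' = τ.other then swapOut v τ σ else 0) - (if τ' = τ then v else 0)
    else σ.Δ := by
  obtain ⟨⟨hv, -, -, hlt⟩, hσ'⟩ := Option.ite_none_right_eq_some.mp h
  cases hσ'
  refine ⟨hv, hlt, ?_, ?_, rfl, rfl⟩
  · simp [hv.le]
  · simp only [Token.other_ne, if_false]
    rw [NNReal.coe_sub (Real.toNNReal_le_iff_le_coe.mpr hlt.le)]
    exact congrArg (_ - ·) (Real.coe_toNNReal _ (swapOut_nonneg hv.le))

end Swap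

namespace AMMSys

noncomputable def reserveValue (pr₀ pr₁ : ℝ) (σ : AMMSys) : ℝ :=
  pr₀ * σ.s.bal .τ₀ + pr₁ * σ.s.bal .τ₁

noncomputable def reserveProduct (σ : AMMSys) : ℝ :=
  σ.s.bal .τ₀ * σ.s.bal .τ₁

def advValue (pr₀ pr₁ : ℝ) (σ : AMMSys) : ℝ :=
  pr₀ * σ.Δ .τ₀ + pr₁ * σ.Δ .τ₁

noncomputable def potential (pr₀ pr₁ : ℝ) (σ : AMMSys) : ℝ :=
  σ.advValue pr₀ pr₁ + extractable pr₀ pr₁ σ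

section Decomposition

variable {pr₀ pr₁ : ℝ} (σ : AMMSys)

lemma reserveValue_eq (τ : Token) :
    σ.reserveValue pr₀ pr₁ =
      τ.price pr₀ pr₁ * σ.s.bal τ + τ.other.price pr₀ pr₁ * σ.s.bal τ.other := by
  cases τ
  · rfl
  · simp only [reserveValue, Token.price, Token.other]; ring

lemma reserveProduct_eq (τ : Token) :
    σ.reserveProduct = σ.s.bal τ * σ.s.bal τ.other := by
  cases τ
  · rfl
  · simp only [reserveProduct, Token.other]; ring

lemma advValue_eq (τ : Token) :
    σ.advValue pr₀ pr₁ = τ.price pr₀ pr₁ * σ.Δ τ + τ.other.price pr₀ pr₁ * σ.Δ τ.other := by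
  cases τ
  · rfl
  · simp only [advValue, Token.price, Token.other]; ring

lemma extractable_eq (hpr₀ : 0 ≤ pr₀) (hpr₁ : 0 ≤ pr₁) :
    extractable pr₀ pr₁ σ =
      σ.reserveValue pr₀ pr₁ - 2 * √(pr₀ * pr₁ * σ.reserveProduct) := by
  have h₀ : 0 ≤ pr₀ * (σ.s.bal .τ₀ : ℝ) := by positivity
  have h₁ : 0 ≤ pr₁ * (σ.s.bal .τ₁ : ℝ) := by positivity
  have hmul : pr₀ * pr₁ * σ.reserveProduct = (pr₀ * σ.s.bal .τ₀) * (pr₁ * σ.s.bal .τ₁) := by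
    rw [reserveProduct]; ring
  rw [extractable, sub_sq, Real.sq_sqrt h₀, Real.sq_sqrt h₁, hmul, Real.sqrt_mul h₀,
    reserveValue]
  ring

lemma gainMoves_eq (tr : List Move) :
    gainMoves pr₀ pr₁ σ tr = (semMoves σ tr).advValue pr₀ pr₁ - σ.advValue pr₀ pr₁ := by
  rw [gainMoves, advValue, advValue]; ring

end Decomposition

section Swap

variable {pr₀ pr₁ : ℝ} {P : Participant} {v : ℝ} {τ : Token} {vmin : ℝ} {σ σ' : AMMSys}

lemma reserveProduct_swapSem (h : swapSem P v τ vmin σ = some σ') :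
    σ'.reserveProduct = σ.reserveProduct := by
  obtain ⟨hv, -, hin, hout, -⟩ := swapSem_eq_some h
  have : (σ.s.bal τ : ℝ) + v ≠ 0 := by positivity
  rw [reserveProduct_eq σ' τ, reserveProduct_eq σ τ, hin, hout, swapOut]
  field_simp
  ring

lemma reserveValue_swapSem (h : swapSem P v τ vmin σ = some σ') :
    σ'.reserveValue pr₀ pr₁ = σ.reserveValue pr₀ pr₁ + τ.price pr₀ pr₁ * v
      - τ.other.price pr₀ pr₁ * swapOut v τ σ := by
  obtain ⟨-, -, hin, hout, -⟩ := swapSem_eq_some h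
  rw [reserveValue_eq σ' τ, reserveValue_eq σ τ, hin, hout]
  ring

lemma advValue_swapSem_adv (h : swapSem .Adv v τ vmin σ = some σ') :
    σ'.advValue pr₀ pr₁ = σ.advValue pr₀ pr₁ - τ.price pr₀ pr₁ * v
      + τ.other.price pr₀ pr₁ * swapOut v τ σ := by
  obtain ⟨-, -, -, -, -, hΔ⟩ := swapSem_eq_some h
  rw [advValue_eq σ' τ, advValue_eq σ τ, hΔ]
  simp only [if_true, Token.other_ne, (Token.other_ne τ).symm, if_false]
  ring

lemma advValue_swapSem_of_ne_adv (hP : P ≠ .Adv) (h : swapSem P v τ vmin σ = some σ') :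
    σ'.advValue pr₀ pr₁ = σ.advValue pr₀ pr₁ := by
  obtain ⟨-, -, -, -, -, hΔ⟩ := swapSem_eq_some h
  rw [advValue, advValue, hΔ, if_neg hP]

lemma potential_swapSem_adv (hpr₀ : 0 ≤ pr₀) (hpr₁ : 0 ≤ pr₁)
    (h : swapSem .Adv v τ vmin σ = some σ') :
    σ'.potential pr₀ pr₁ = σ.potential pr₀ pr₁ := by
  rw [potential, potential, extractable_eq σ hpr₀ hpr₁, extractable_eq σ' hpr₀ hpr₁,
    reserveProduct_swapSem h, reserveValue_swapSem h, advValue_swapSem_adv h]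
  ring

lemma potential_swapSem_lt (hpr₀ : 0 < pr₀) (hpr₁ : 0 < pr₁)
    (h : swapSem P v τ vmin σ = some σ') :
    σ'.potential pr₀ pr₁ < σ.potential pr₀ pr₁ + τ.price pr₀ pr₁ * v := by
  obtain ⟨hv, hlt, -⟩ := swapSem_eq_some h
  by_cases hP : P = .Adv
  · subst hP
    rw [potential_swapSem_adv hpr₀.le hpr₁.le h]
    linarith [mul_pos (Token.price_pos hpr₀ hpr₁ τ) hv]
  · rw [potential, potential, extractable_eq σ hpr₀.le hpr₁.le,
      extractable_eq σ' hpr₀.le hpr₁.le, reserveProduct_swapSem h, reserveValue_swapSem h,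
      advValue_swapSem_of_ne_adv hP h]
    linarith [mul_pos (Token.price_pos hpr₀ hpr₁ τ.other) (swapOut_pos hv hlt)]

end Swap

section Moves

variable {pr₀ pr₁ : ℝ} {σ σ' : AMMSys} {m : Move} {i : TxId} {t : Tx}

lemma mempool_potential_semMove_of_mempool_nil (hpr₀ : 0 ≤ pr₀) (hpr₁ : 0 ≤ pr₁)
    (hmp : σ.s.mempool = []) (h : semMove σ m = some σ') :
    σ'.s.mempool = [] ∧ σ'.potential pr₀ pr₁ = σ.potential pr₀ pr₁ := by
  cases m with
  | adv v hv τ vmin =>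
    obtain ⟨-, -, -, -, hmp', -⟩ := swapSem_eq_some h
    exact ⟨hmp'.trans hmp, potential_swapSem_adv hpr₀ hpr₁ h⟩
  | mempool j => simp [semMove, hmp] at h

lemma potential_semMoves_of_mempool_nil (hpr₀ : 0 ≤ pr₀) (hpr₁ : 0 ≤ pr₁) (tr : List Move)
    (hmp : σ.s.mempool = []) :
    (semMoves σ tr).potential pr₀ pr₁ = σ.potential pr₀ pr₁ := by
  induction tr generalizing σ with
  | nil => rfl
  | cons m tr ih =>
    cases h : semMove σ m with
    | none => simp only [semMoves, h, ih hmp]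
    | some σ' =>
      obtain ⟨hmp', hpot⟩ := mempool_potential_semMove_of_mempool_nil hpr₀ hpr₁ hmp h
      simp only [semMoves, h, ih hmp', hpot]

lemma semMove_mempool_of_mempool_singleton (hmp : σ.s.mempool = [(i, t)]) {j : TxId}
    (h : semMove σ (.mempool j) = some σ') :
    ∃ σ₁, swapSem t.P t.v t.τ t.vmin σ = some σ₁ ∧
      σ' = ⟨σ₁.Δ, ⟨σ₁.s.bal, σ₁.s.wal, []⟩⟩ := by
  by_cases hij : i = j
  · subst hij
    cases hsw : swapSem t.P t.v t.τ t.vmin σ with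
    | none => simp [semMove, hmp, hsw] at h
    | some σ₁ =>
      refine ⟨σ₁, rfl, ?_⟩
      simp only [semMove, hmp, hsw, List.find?_cons, beq_self_eq_true, List.filter_cons,
        bne_self_eq_false, List.filter_nil, Option.some.injEq] at h
      exact h.symm
  · simp [semMove, hmp, hij] at h

lemma mempool_potential_semMove_of_mempool_singleton (hpr₀ : 0 < pr₀) (hpr₁ : 0 < pr₁)
    (hmp : σ.s.mempool = [(i, t)]) (h : semMove σ m = some σ') :
    (σ'.s.mempool = [(i, t)] ∧ σ'.potential pr₀ pr₁ = σ.potential pr₀ pr₁) ∨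
      (σ'.s.mempool = [] ∧
        σ'.potential pr₀ pr₁ < σ.potential pr₀ pr₁ + t.τ.price pr₀ pr₁ * t.v) := by
  cases m with
  | adv v hv τ vmin =>
    obtain ⟨-, -, -, -, hmp', -⟩ := swapSem_eq_some h
    exact .inl ⟨hmp'.trans hmp, potential_swapSem_adv hpr₀.le hpr₁.le h⟩
  | mempool j =>
    obtain ⟨σ₁, hsw, rfl⟩ := semMove_mempool_of_mempool_singleton hmp h
    exact .inr ⟨rfl, show σ₁.potential pr₀ pr₁ < _ from potential_swapSem_lt hpr₀ hpr₁ hsw⟩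

lemma potential_semMoves_lt_of_mempool_singleton (hpr₀ : 0 < pr₀) (hpr₁ : 0 < pr₁)
    (tr : List Move) (hmp : σ.s.mempool = [(i, t)]) :
    (semMoves σ tr).potential pr₀ pr₁ < σ.potential pr₀ pr₁ + t.τ.price pr₀ pr₁ * t.v := by
  induction tr generalizing σ with
  | nil => exact lt_add_of_pos_right _ (mul_pos (Token.price_pos hpr₀ hpr₁ t.τ) t.v_pos)
  | cons m tr ih =>
    cases h : semMove σ m with
    | none => simpa only [semMoves, h] using ih hmp
    | some σ' =>
      simp only [semMoves, h]
      rcases mempool_potential_semMove_of_mempool_singleton hpr₀ hpr₁ hmp h with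
        ⟨hmp', hpot⟩ | ⟨hmp', hpot⟩
      · rw [← hpot]; exact ih hmp'
      · rwa [potential_semMoves_of_mempool_nil hpr₀.le hpr₁.le tr hmp']

end Moves

end AMMSys

theorem gain_lt_sup_singleton_vmin_zero_general (pr₀ pr₁ : ℝ)
    (hpr₀ : 0 < pr₀) (hpr₁ : 0 < pr₁) (σ : AMMSys)
    (id : TxId) (tx : Tx)
    (hmp : σ.s.mempool = [(id, tx)])
    (hτ : tx.τ = .τ₀) :
    ∀ tr : List Move,
      gainMoves pr₀ pr₁ σ tr < extractable pr₀ pr₁ σ + tx.v * pr₀ := by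
  intro tr
  have hpot := AMMSys.potential_semMoves_lt_of_mempool_singleton hpr₀ hpr₁ tr hmp
  rw [hτ, Token.price] at hpot
  rw [AMMSys.gainMoves_eq]
  unfold AMMSys.potential at hpot
  linarith [extractable_nonneg pr₀ pr₁ (semMoves σ tr)]

/-- If the mempool contains exactly one honest swap of `v > 0` units of τ₀ with
minimum-output constraint `vmin = 0` (and the honest sender owns the `v` units),
then every adversarial trace gains strictly less than
`extractable σ + v·pr₀`. -/
theorem gain_lt_sup_singleton_vmin_zero (pr₀ pr₁ : ℝ)
    (hpr₀ : 0 < pr₀) (hpr₁ : 0 < pr₁) (σ : AMMSys)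
    (hb₀ : 0 < σ.s.bal .τ₀) (hb₁ : 0 < σ.s.bal .τ₁)
    (id : TxId) (tx : Tx)
    (hmp : σ.s.mempool = [(id, tx)])
    (hτ : tx.τ = .τ₀) (hvmin : tx.vmin = 0) (hhon : tx.P ≠ .Adv)
    (howns : tx.v ≤ (σ.s.wal .τ₀ : ℝ)) :
    ∀ tr : List Move,
      gainMoves pr₀ pr₁ σ tr < extractable pr₀ pr₁ σ + tx.v * pr₀ :=
  gain_lt_sup_singleton_vmin_zero_general pr₀ pr₁ hpr₀ hpr₁ σ id tx hmp hτ
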